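/- Let Γ be a finite simple graph with vertex set V = {1, …, n} whose 4-cliques are almost disjoint, i.e., no two distinct 4-cliques of Γ intersect in a 3-clique (any two distinct 4-cliques share at most two vertices). Let X be a 4-clique of Γ, let H be the subgroup of P_Γ generated by {a_{ij} : i < j, {i,j} ⊆ X}, and let {r,s} be an edge of Γ with {r,s} ⊄ X. Then [[H, H], a_{rs}] = 1 in P_Γ, i.e., a_{rs} commutes with every element of the commutator subgroup [H, H]. -/

import Mathlib

/-!
One of `r`, `s`, call it `t`, lies outside `X`. If `t` were adjacent to three vertices of `X`, these
would form with `t` a 4-clique meeting `X` in a triangle, so the neighbours of `t` in `X` lie in a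
pair `{u, v}`. Every other generator `a_pq` of `X` has an endpoint not adjacent to `t`, and the
vanishing of `a_tp` or `a_tq` turns the Artin relations into `[a_rs, a_pq] = 1`. Hence the
subgroup `K` generated by the generators of `X` other than `a_uv` centralizes `a_rs`. Moreover
`a_uv` normalizes `K`: in a triangle `i < j < k` the product `a_ij a_ik a_jk` commutes with its
factors, so conjugating by one edge acts on the other two as conjugation by an element of the
subgroup they generate. So `H ≤ K ⊔ ⟨a_uv⟩`, in which `K` is normal with cyclic quotient, and
`[H, H] ≤ K`.
-/

abbrev PBIdx (n : ℕ) : Type := {p : Fin n × Fin n // p.1 < p.2}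

namespace GraphicBraid

open scoped commutatorElement

def ofIdx {n : ℕ} {i j : Fin n} (h : i < j) : FreeGroup (PBIdx n) :=
  FreeGroup.of ⟨(i, j), h⟩

/-- The Artin relators for the pure braid group `P_n`. -/
def pureBraidRels (n : ℕ) : Set (FreeGroup (PBIdx n)) :=
  {w | ∃ (i j r s : Fin n) (hij : i < j) (hrs : r < s),
      (s < i ∨ (i < r ∧ s < j)) ∧ w = ⁅ofIdx hij, ofIdx hrs⁆} ∪
  {w | ∃ (r i s j : Fin n) (hri : r < i) (his : i < s) (hsj : s < j),
      w = ⁅ofIdx (his.trans hsj), ofIdx hsj * ofIdx (hri.trans his) * (ofIdx hsj)⁻¹⁆} ∪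
  {w | ∃ (i j r : Fin n) (hij : i < j) (hjr : j < r),
      w = ⁅ofIdx hij * ofIdx (hij.trans hjr), ofIdx hjr⁆ ∨
      w = ⁅ofIdx hij, ofIdx (hij.trans hjr) * ofIdx hjr⁆}

/-- Relators killing the generators corresponding to non-edges of `Γ`. -/
def nonEdgeRels {n : ℕ} (Γ : SimpleGraph (Fin n)) : Set (FreeGroup (PBIdx n)) :=
  {w | ∃ p : PBIdx n, ¬ Γ.Adj p.1.1 p.1.2 ∧ w = FreeGroup.of p}

def graphicRels {n : ℕ} (Γ : SimpleGraph (Fin n)) : Set (FreeGroup (PBIdx n)) :=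
  pureBraidRels n ∪ nonEdgeRels Γ

/-- The graphic pure braid group `P_Γ`. -/
abbrev GPB {n : ℕ} (Γ : SimpleGraph (Fin n)) : Type := PresentedGroup (graphicRels Γ)

/-- The image of the Artin generator `a_{ij}` in `P_Γ`. -/
def agen {n : ℕ} (Γ : SimpleGraph (Fin n)) {i j : Fin n} (h : i < j) : GPB Γ :=
  PresentedGroup.of (rels := graphicRels Γ) ⟨(i, j), h⟩

/-- Relators killing the generators `a_{ij}` with `{i,j} ⊄ X`. -/
def killRels {n : ℕ} (X : Set (Fin n)) : Set (FreeGroup (PBIdx n)) :=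
  {w | ∃ p : PBIdx n, ¬ (p.1.1 ∈ X ∧ p.1.2 ∈ X) ∧ w = FreeGroup.of p}

/-- The quotient `P_X` of `P_Γ` obtained by killing all generators `a_{ij}` with `{i,j} ⊄ X`. -/
abbrev GPBX {n : ℕ} (Γ : SimpleGraph (Fin n)) (X : Set (Fin n)) : Type :=
  PresentedGroup (graphicRels Γ ∪ killRels X)

/-- The canonical surjection between presented groups when the set of relators grows. -/
def quotMap {α : Type*} {R S : Set (FreeGroup α)} (h : R ⊆ S) :
    PresentedGroup R →* PresentedGroup S :=
  QuotientGroup.map _ _ (MonoidHom.id _)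
    (fun _ hx => Subgroup.normalClosure_mono h hx)

/-- The quotient map `ρ_X : P_Γ → P_X`. -/
def rho {n : ℕ} (Γ : SimpleGraph (Fin n)) (X : Set (Fin n)) : GPB Γ →* GPBX Γ X :=
  quotMap Set.subset_union_left

lemma killRels_anti {n : ℕ} {X Y : Set (Fin n)} (h : X ⊆ Y) : killRels Y ⊆ killRels X := by
  rintro w ⟨p, hp, rfl⟩
  exact ⟨p, fun hx => hp ⟨h hx.1, h hx.2⟩, rfl⟩

/-- The quotient map `P_Y → P_X` for `X ⊆ Y`. -/
def rhoDown {n : ℕ} (Γ : SimpleGraph (Fin n)) {X Y : Set (Fin n)} (h : X ⊆ Y) :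
    GPBX Γ Y →* GPBX Γ X :=
  quotMap (Set.union_subset_union_right _ (killRels_anti h))

/-- `X` is a maximal clique of `Γ`. -/
def MaxClique {n : ℕ} (Γ : SimpleGraph (Fin n)) (X : Set (Fin n)) : Prop :=
  Γ.IsClique X ∧ ∀ Y : Set (Fin n), Γ.IsClique Y → X ⊆ Y → Y = X


/-- The subgroup of `P_Γ` generated by the generators `a_{ij}` with `{i,j} ⊆ X`. -/
def cliqueSubgroup {n : ℕ} (Γ : SimpleGraph (Fin n)) (X : Set (Fin n)) : Subgroup (GPB Γ) :=
  Subgroup.closure {g : GPB Γ | ∃ p : PBIdx n, (p.1.1 ∈ X ∧ p.1.2 ∈ X) ∧ g = PresentedGroup.of p}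

/-- The bipartite incidence graph of edges and 3-cliques (triangles) of `Γ`. -/
def incidenceGraph {n : ℕ} (Γ : SimpleGraph (Fin n)) :
    SimpleGraph (Γ.edgeSet ⊕ {T : Finset (Fin n) // Γ.IsNClique 3 T}) where
  Adj x y :=
    match x, y with
    | Sum.inl e, Sum.inr T => ∀ v : Fin n, v ∈ (e : Sym2 (Fin n)) → v ∈ T.1
    | Sum.inr T, Sum.inl e => ∀ v : Fin n, v ∈ (e : Sym2 (Fin n)) → v ∈ T.1
    | _, _ => False
  symm := ⟨by rintro (e | T) (f | S) h <;> exact h⟩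
  loopless := ⟨by rintro (e | T) h <;> exact h⟩

end GraphicBraid

open Subgroup

open scoped commutatorElement

section Group

variable {G : Type*} [Group G]

theorem PresentedGroup.commute_mk_of_commutatorElement_mem {α : Type*} {rels : Set (FreeGroup α)}
    {x y : FreeGroup α} (h : ⁅x, y⁆ ∈ rels) :
    Commute (PresentedGroup.mk rels x) (PresentedGroup.mk rels y) := by
  rw [← commutatorElement_eq_one_iff_commute, ← map_commutatorElement]
  exact PresentedGroup.one_of_mem h

theorem Commute.of_conj {a b c : G} (h : Commute a (c * b * c⁻¹)) (hc : Commute a c) :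
    Commute a b := by
  simpa [mul_assoc] using (hc.inv_right.mul_right h).mul_right hc

namespace Subgroup

theorem mem_normalizer_closure_of_conj_mem {s : Set G} {b : G}
    (h : ∀ g ∈ s, b * g * b⁻¹ ∈ closure s ∧ b⁻¹ * g * b ∈ closure s) :
    b ∈ normalizer (closure s : Set G) := by
  have key (c : G) (hc : ∀ g ∈ s, c * g * c⁻¹ ∈ closure s) :
      ∀ g ∈ closure s, c * g * c⁻¹ ∈ closure s := fun g hg =>
    (closure_le ((closure s).comap (MulAut.conj c).toMonoidHom)).mpr hc hg
  refine mem_normalizer_iff.mpr fun g => ⟨key b (fun g hg => (h g hg).1) g, fun hg => ?_⟩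
  simpa [mul_assoc] using key b⁻¹ (by simpa using fun g hg => (h g hg).2) _ hg

theorem commutator_sup_zpowers_le {K : Subgroup G} {b : G} (hb : b ∈ normalizer (K : Set G)) :
    ⁅K ⊔ zpowers b, K ⊔ zpowers b⁆ ≤ K := by
  have hle : zpowers b ≤ normalizer (K : Set G) := zpowers_le.mpr hb
  have conj_mem {c : G} (hc : c ∈ zpowers b) {k : G} (hk : k ∈ K) : c * k * c⁻¹ ∈ K :=
    (mem_normalizer_iff.mp (hle hc) k).mp hk
  rw [commutator_le]
  intro g₁ hg₁ g₂ hg₂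
  rw [← SetLike.mem_coe, coe_mul_of_right_le_normalizer_left _ _ hle] at hg₁ hg₂
  obtain ⟨k₁, hk₁, c₁, hc₁, rfl⟩ := hg₁
  obtain ⟨k₂, hk₂, c₂, hc₂, rfl⟩ := hg₂
  have hc : Commute c₁ c₂ := by
    obtain ⟨m, rfl⟩ := mem_zpowers_iff.mp hc₁
    obtain ⟨l, rfl⟩ := mem_zpowers_iff.mp hc₂
    exact Commute.zpow_zpow_self b m l
  have e : ⁅k₁ * c₁, k₂ * c₂⁆ = k₁ * (c₁ * k₂ * c₁⁻¹) * (c₂ * k₁⁻¹ * c₂⁻¹) * k₂⁻¹ := by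
    calc ⁅k₁ * c₁, k₂ * c₂⁆ = k₁ * c₁ * k₂ * (c₂ * c₁⁻¹) * k₁⁻¹ * c₂⁻¹ * k₂⁻¹ := by
          rw [commutatorElement_def]; group
      _ = _ := by rw [hc.inv_left.symm.eq]; group
  rw [e]
  exact mul_mem (mul_mem (mul_mem hk₁ (conj_mem hc₁ hk₂)) (conj_mem hc₂ (inv_mem hk₁)))
    (inv_mem hk₂)

theorem conj_mem_of_mem_normalizer {L K : Subgroup G} (hLK : L ≤ K) {b h : G}
    (hb : b ∈ normalizer (L : Set G)) (hh : h ∈ L) : b * h * b⁻¹ ∈ K ∧ b⁻¹ * h * b ∈ K :=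
  ⟨hLK ((mem_normalizer_iff.mp hb h).mp hh),
    hLK (by simpa using (mem_normalizer_iff.mp (inv_mem hb) h).mp hh)⟩

theorem conj_mem_of_commute_conj {K : Subgroup G} {b c h : G} (hc : c ∈ K)
    (hbc : b * c * b⁻¹ ∈ K) (hh : h ∈ K) (hcomm : Commute b (c * h * c⁻¹)) :
    b * h * b⁻¹ ∈ K := by
  have e : b * h * b⁻¹ = (b * c * b⁻¹)⁻¹ * (c * h * c⁻¹) * (b * c * b⁻¹) := by
    calc b * h * b⁻¹ = b * c⁻¹ * (b⁻¹ * (b * (c * h * c⁻¹))) * c * b⁻¹ := by group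
      _ = _ := by rw [hcomm.eq]; group
  rw [e]
  exact mul_mem (mul_mem (inv_mem hbc) (mul_mem (mul_mem hc hh) (inv_mem hc))) hbc

theorem conj_mem_of_mem_normalizer_of_commute_conj {L K : Subgroup G} (hLK : L ≤ K) {b c h : G}
    (hb : b ∈ normalizer (L : Set G)) (hc : c ∈ L) (hh : h ∈ K)
    (hcomm : Commute b (c * h * c⁻¹)) : b * h * b⁻¹ ∈ K ∧ b⁻¹ * h * b ∈ K :=
  ⟨conj_mem_of_commute_conj (hLK hc) (conj_mem_of_mem_normalizer hLK hb hc).1 hh hcomm,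
    by simpa using (conj_mem_of_commute_conj (hLK hc)
      (by simpa using (conj_mem_of_mem_normalizer hLK hb hc).2) hh hcomm.inv_left)⟩

theorem conj_mem_of_commute {K : Subgroup G} {b h : G} (hcomm : Commute b h) (hh : h ∈ K) :
    b * h * b⁻¹ ∈ K ∧ b⁻¹ * h * b ∈ K :=
  ⟨by rwa [hcomm.eq, mul_inv_cancel_right], by rwa [hcomm.inv_left.eq, inv_mul_cancel_right]⟩

end Subgroup

-- Equivalently, `x * y * z` commutes with `x`, `y` and `z`; by the third family of Artin relations
-- this holds for the generators `a_ij, a_ik, a_jk` of every triangle `i < j < k`.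
def IsCyclicTriple (x y z : G) : Prop :=
  x * y * z = y * z * x ∧ x * y * z = z * x * y

namespace IsCyclicTriple

variable {x y z : G}

theorem rotate (h : IsCyclicTriple x y z) : IsCyclicTriple y z x :=
  ⟨h.1.symm.trans h.2, h.1.symm⟩

theorem commute_of_eq_one (h : IsCyclicTriple x y z) (hx : x = 1) : Commute y z := by
  simpa [hx, Commute, SemiconjBy] using h.2

theorem conj_eq (h : IsCyclicTriple x y z) : z * x * z⁻¹ = y⁻¹ * x * y := by
  calc z * x * z⁻¹ = y⁻¹ * (y * z * x) * z⁻¹ := by group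
    _ = y⁻¹ * x * y := by rw [← h.1]; group

theorem mem_normalizer_closure (h : IsCyclicTriple x y z) :
    x ∈ normalizer (closure {y, z} : Set G) := by
  have hΔ : x * y * z ∈ centralizer (closure {y, z} : Set G) := by
    rw [centralizer_closure, mem_centralizer_iff]
    rintro g (rfl | rfl)
    · calc g * (x * g * z) = g * z * x * g := by rw [h.2]; group
        _ = x * g * z * g := by rw [← h.1]
    · calc g * (x * y * g) = g * x * y * g := by group
        _ = x * y * g * g := by rw [← h.2]
  have hyz : (y * z)⁻¹ ∈ closure {y, z} :=
    inv_mem (mul_mem (subset_closure (by simp)) (subset_closure (by simp)))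
  simpa using mul_mem (centralizer_le_normalizer _ hΔ) (le_normalizer hyz)

end IsCyclicTriple

end Group

theorem Finset.exists_lt_cover_filter_of_card_le_two {α : Type*} [LinearOrder α] {X : Finset α}
    {P : α → Prop} [DecidablePred P] (hX : 2 ≤ X.card) (hP : (X.filter P).card ≤ 2) :
    ∃ u v, u < v ∧ u ∈ X ∧ v ∈ X ∧ ∀ z ∈ X, P z → z = u ∨ z = v := by
  obtain ⟨S, hPS, hSX, hS⟩ := exists_subsuperset_card_eq (filter_subset P X) hP hX
  obtain ⟨a, b, hab, rfl⟩ := card_eq_two.mp hS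
  have hcover (z : α) (hz : z ∈ X) (hPz : P z) : z = a ∨ z = b := by
    simpa using hPS (mem_filter.mpr ⟨hz, hPz⟩)
  rcases hab.lt_or_gt with h | h
  · exact ⟨a, b, h, hSX (by simp), hSX (by simp), hcover⟩
  · exact ⟨b, a, h, hSX (by simp), hSX (by simp), fun z hz hPz => (hcover z hz hPz).symm⟩

namespace GraphicBraid

section Lemmas

variable {n : ℕ} {Γ : SimpleGraph (Fin n)}

theorem agen_eq_one_of_not_adj {i j : Fin n} (h : i < j) (hne : ¬Γ.Adj i j) : agen Γ h = 1 :=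
  PresentedGroup.one_of_mem (Or.inr ⟨⟨(i, j), h⟩, hne, rfl⟩)

theorem agen_commute_of_unlinked {i j r s : Fin n} (hij : i < j) (hrs : r < s)
    (h : s < i ∨ (i < r ∧ s < j)) : Commute (agen Γ hij) (agen Γ hrs) :=
  PresentedGroup.commute_mk_of_commutatorElement_mem
    (Or.inl (Or.inl (Or.inl ⟨i, j, r, s, hij, hrs, h, rfl⟩)))

theorem agen_commute_conj_of_linked {i j k l : Fin n} (hij : i < j) (hjk : j < k) (hkl : k < l) :
    Commute (agen Γ (hjk.trans hkl)) (agen Γ hkl * agen Γ (hij.trans hjk) * (agen Γ hkl)⁻¹) :=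
  PresentedGroup.commute_mk_of_commutatorElement_mem
    (Or.inl (Or.inl (Or.inr ⟨i, j, k, l, hij, hjk, hkl, rfl⟩)))

theorem agen_isCyclicTriple {i j k : Fin n} (hij : i < j) (hjk : j < k) :
    IsCyclicTriple (agen Γ hij) (agen Γ (hij.trans hjk)) (agen Γ hjk) := by
  have h₁ : Commute (agen Γ hij) (agen Γ (hij.trans hjk) * agen Γ hjk) :=
    PresentedGroup.commute_mk_of_commutatorElement_mem
      (Or.inl (Or.inr ⟨i, j, k, hij, hjk, Or.inr rfl⟩))
  have h₂ : Commute (agen Γ hij * agen Γ (hij.trans hjk)) (agen Γ hjk) :=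
    PresentedGroup.commute_mk_of_commutatorElement_mem
      (Or.inl (Or.inr ⟨i, j, k, hij, hjk, Or.inl rfl⟩))
  exact ⟨by simpa only [mul_assoc] using h₁.eq, by simpa only [mul_assoc] using h₂.eq⟩

theorem agen_commute_of_linked_of_not_adj {i j k l : Fin n} (hij : i < j) (hjk : j < k)
    (hkl : k < l) (h : ¬Γ.Adj i j ∨ ¬Γ.Adj i l ∨ ¬Γ.Adj j k ∨ ¬Γ.Adj k l) :
    Commute (agen Γ (hij.trans hjk)) (agen Γ (hjk.trans hkl)) := by
  have hrel := agen_commute_conj_of_linked (Γ := Γ) hij hjk hkl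
  have hikl := agen_isCyclicTriple (Γ := Γ) (hij.trans hjk) hkl
  refine Commute.symm ?_
  rcases h with h | h | h | h
  · have hc := (agen_isCyclicTriple hij (hjk.trans hkl)).commute_of_eq_one
      (agen_eq_one_of_not_adj hij h)
    rw [hikl.conj_eq] at hrel
    exact Commute.of_conj (c := (agen Γ _)⁻¹) (by simpa using hrel) hc.symm.inv_right
  · have hc := hikl.rotate.commute_of_eq_one (agen_eq_one_of_not_adj _ h)
    rwa [hc.eq, mul_inv_cancel_right] at hrel
  · exact hrel.of_conj
      ((agen_isCyclicTriple hjk hkl).commute_of_eq_one (agen_eq_one_of_not_adj hjk h))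
  · simpa [agen_eq_one_of_not_adj hkl h] using hrel

theorem agen_commute_of_disjoint_of_not_adj {r s p q : Fin n} (hrs : r < s) (hpq : p < q)
    (hrp : r ≠ p) (hrq : r ≠ q) (hsp : s ≠ p) (hsq : s ≠ q)
    (h : ¬Γ.Adj r p ∨ ¬Γ.Adj r q ∨ ¬Γ.Adj s p ∨ ¬Γ.Adj s q) :
    Commute (agen Γ hrs) (agen Γ hpq) := by
  wlog hrp' : r < p generalizing r s p q
  · refine (this hpq hrs hrp.symm hsp.symm hrq.symm hsq.symm ?_ (by omega)).symm
    simp only [Γ.adj_comm] at h ⊢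
    tauto
  rcases lt_or_gt_of_ne hsp with hsp' | hps
  · exact (agen_commute_of_unlinked hpq hrs (Or.inl hsp')).symm
  rcases lt_or_gt_of_ne hsq with hsq' | hqs
  · exact agen_commute_of_linked_of_not_adj hrp' hps hsq' (by rwa [Γ.adj_comm s p] at h)
  · exact agen_commute_of_unlinked hrs hpq (Or.inr ⟨hrp', hqs⟩)

theorem agen_commute_of_not_adj {r s p q t : Fin n} (hrs : r < s) (hpq : p < q)
    (ht : t = r ∨ t = s) (htp : t ≠ p) (htq : t ≠ q) (h : ¬Γ.Adj t p ∨ ¬Γ.Adj t q) :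
    Commute (agen Γ hrs) (agen Γ hpq) := by
  by_cases hadj : Γ.Adj r s
  swap
  · simp [agen_eq_one_of_not_adj hrs hadj]
  rcases ht with rfl | rfl
  · by_cases hsp : s = p
    · subst hsp
      have hdead := h.resolve_left (not_not.mpr hadj)
      exact ((agen_isCyclicTriple hrs hpq).rotate.commute_of_eq_one
        (agen_eq_one_of_not_adj _ hdead)).symm
    by_cases hsq : s = q
    · subst hsq
      have hdead := h.resolve_right (not_not.mpr hadj)
      rcases htp.lt_or_gt with htp' | hpt
      · exact (agen_isCyclicTriple htp' hpq).commute_of_eq_one (agen_eq_one_of_not_adj htp' hdead)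
      · exact ((agen_isCyclicTriple hpt hrs).commute_of_eq_one
          (agen_eq_one_of_not_adj hpt fun h => hdead h.symm)).symm
    exact agen_commute_of_disjoint_of_not_adj hrs hpq htp htq hsp hsq
      (h.imp id Or.inl)
  · by_cases hrp : r = p
    · subst hrp
      have hdead := h.resolve_left (not_not.mpr hadj.symm)
      rcases htq.lt_or_gt with htq' | hqt
      · exact (agen_isCyclicTriple hrs htq').rotate.rotate.commute_of_eq_one
          (agen_eq_one_of_not_adj htq' hdead)
      · exact ((agen_isCyclicTriple hpq hqt).rotate.rotate.commute_of_eq_one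
          (agen_eq_one_of_not_adj hqt fun h => hdead h.symm)).symm
    by_cases hrq : r = q
    · subst hrq
      have hdead := h.resolve_right (not_not.mpr hadj.symm)
      exact (agen_isCyclicTriple hpq hrs).rotate.commute_of_eq_one
        (agen_eq_one_of_not_adj _ fun h => hdead h.symm)
    exact agen_commute_of_disjoint_of_not_adj hrs hpq hrp hrq htp htq
      (Or.inr (Or.inr h))

-- Unlinked pairs commute, pairs sharing a vertex span a triangle, and for linked pairs the second
-- family of Artin relations reduces conjugation by `a_xy` to conjugation inside a triangle.
theorem agen_conj_mem {x y z w : Fin n} (hxy : x < y) (hzw : z < w) (hne : ¬(z = x ∧ w = y))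
    {Y : Set (Fin n)} (hx : x ∈ Y) (hy : y ∈ Y) (hz : z ∈ Y) (hw : w ∈ Y) {K : Subgroup (GPB Γ)}
    (hK : ∀ ⦃p q⦄ (hpq : p < q), p ∈ Y → q ∈ Y → ¬(p = x ∧ q = y) → agen Γ hpq ∈ K) :
    agen Γ hxy * agen Γ hzw * (agen Γ hxy)⁻¹ ∈ K ∧
      (agen Γ hxy)⁻¹ * agen Γ hzw * agen Γ hxy ∈ K := by
  have hzwK := hK hzw hz hw hne
  have pair {u v : GPB Γ} (hu : u ∈ K) (hv : v ∈ K) : closure {u, v} ≤ K :=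
    (closure_le _).mpr (Set.pair_subset hu hv)
  rcases lt_trichotomy w y with hwy | rfl | hyw
  · rcases lt_trichotomy w x with hwx | rfl | hxw
    · exact conj_mem_of_commute (agen_commute_of_unlinked hxy hzw (Or.inl hwx)) hzwK
    · exact conj_mem_of_mem_normalizer (pair hzwK (hK _ hz hy (by omega)))
        (agen_isCyclicTriple hzw hxy).rotate.rotate.mem_normalizer_closure
        (subset_closure (by simp))
    have hxwy := (agen_isCyclicTriple (Γ := Γ) hxw hwy).rotate.mem_normalizer_closure
    have hL := pair (hK hwy hw hy (by omega)) (hK hxw hx hw (by omega))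
    rcases lt_trichotomy z x with hzx | rfl | hxz
    · exact conj_mem_of_mem_normalizer_of_commute_conj hL hxwy (subset_closure (by simp)) hzwK
        (agen_commute_conj_of_linked hzx hxw hwy)
    · exact conj_mem_of_mem_normalizer hL hxwy (subset_closure (by simp))
    · exact conj_mem_of_commute (agen_commute_of_unlinked hxy hzw (Or.inr ⟨hxz, hwy⟩)) hzwK
  · rcases lt_trichotomy z x with hzx | rfl | hxz
    · exact conj_mem_of_mem_normalizer (pair (hK hzx hz hx (by omega)) hzwK)
        (agen_isCyclicTriple hzx hxy).rotate.rotate.mem_normalizer_closure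
        (subset_closure (by simp))
    · exact absurd ⟨rfl, rfl⟩ hne
    · exact conj_mem_of_mem_normalizer (pair hzwK (hK hxz hx hz (by omega)))
        (agen_isCyclicTriple hxz hzw).rotate.mem_normalizer_closure (subset_closure (by simp))
  · have hxyw := (agen_isCyclicTriple (Γ := Γ) hxy hyw).mem_normalizer_closure
    have hL := pair (hK (hxy.trans hyw) hx hw (by omega)) (hK hyw hy hw (by omega))
    rcases lt_trichotomy z y with hzy | rfl | hyz
    · rcases lt_trichotomy z x with hzx | rfl | hxz
      · exact conj_mem_of_commute
          (agen_commute_of_unlinked hzw hxy (Or.inr ⟨hzx, hyw⟩)).symm hzwK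
      · exact conj_mem_of_mem_normalizer hL hxyw (subset_closure (by simp))
      · have hrel : Commute (agen Γ hxy) ((agen Γ hyw)⁻¹ * agen Γ hzw * (agen Γ hyw)⁻¹⁻¹) :=
          (Commute.conj_iff (agen Γ hyw)).mp <| by
            rw [inv_inv, show ∀ a g : GPB Γ, a * (a⁻¹ * g * a) * a⁻¹ = g from fun _ _ => by group]
            exact (agen_commute_conj_of_linked hxz hzy hyw).symm
        exact conj_mem_of_mem_normalizer_of_commute_conj hL hxyw
          (inv_mem (subset_closure (by simp))) hzwK hrel
    · exact conj_mem_of_mem_normalizer hL hxyw (subset_closure (by simp))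
    · exact conj_mem_of_commute (agen_commute_of_unlinked hzw hxy (Or.inl hyz)).symm hzwK

def cliqueSubgroupErase (Γ : SimpleGraph (Fin n)) (X : Set (Fin n)) (e : PBIdx n) :
    Subgroup (GPB Γ) :=
  closure {g : GPB Γ | ∃ p : PBIdx n, (p.1.1 ∈ X ∧ p.1.2 ∈ X) ∧ p ≠ e ∧ g = PresentedGroup.of p}

theorem agen_mem_normalizer_cliqueSubgroupErase {x y : Fin n} (hxy : x < y) {X : Set (Fin n)}
    (hx : x ∈ X) (hy : y ∈ X) :
    agen Γ hxy ∈ normalizer (cliqueSubgroupErase Γ X ⟨(x, y), hxy⟩ : Set (GPB Γ)) := by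
  refine mem_normalizer_closure_of_conj_mem ?_
  rintro _ ⟨⟨⟨z, w⟩, hzw⟩, ⟨hz, hw⟩, hne, rfl⟩
  exact agen_conj_mem hxy hzw (fun ⟨h₁, h₂⟩ => hne (by subst h₁ h₂; rfl)) hx hy hz hw
    fun _ _ hpq hp hq hpq' =>
      subset_closure ⟨⟨_, hpq⟩, ⟨hp, hq⟩, fun h => hpq' (by simpa using h), rfl⟩

theorem cliqueSubgroup_le_cliqueSubgroupErase_sup {x y : Fin n} (hxy : x < y) (X : Set (Fin n)) :
    cliqueSubgroup Γ X ≤ cliqueSubgroupErase Γ X ⟨(x, y), hxy⟩ ⊔ zpowers (agen Γ hxy) := by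
  rw [cliqueSubgroup, closure_le]
  rintro _ ⟨p, hp, rfl⟩
  by_cases hpe : p = ⟨(x, y), hxy⟩
  · subst hpe
    exact mem_sup_right (mem_zpowers _)
  · exact mem_sup_left (subset_closure ⟨p, hp, hpe, rfl⟩)

theorem cliqueSubgroupErase_le_centralizer {r s t u v : Fin n} (hrs : r < s) (huv : u < v)
    (ht : t = r ∨ t = s) {X : Set (Fin n)} (htX : t ∉ X)
    (hnbr : ∀ z ∈ X, Γ.Adj t z → z = u ∨ z = v) :
    cliqueSubgroupErase Γ X ⟨(u, v), huv⟩ ≤ centralizer {agen Γ hrs} := by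
  rw [cliqueSubgroupErase, closure_le]
  rintro _ ⟨⟨⟨p, q⟩, hpq⟩, ⟨hp, hq⟩, hne, rfl⟩
  have hpq' : ¬Γ.Adj t p ∨ ¬Γ.Adj t q := by
    by_contra! h
    rcases hnbr p hp h.1 with rfl | rfl <;> rcases hnbr q hq h.2 with rfl | rfl
    · exact lt_irrefl _ hpq
    · exact hne rfl
    · exact lt_asymm hpq huv
    · exact lt_irrefl _ hpq
  exact mem_centralizer_singleton_iff.mpr (agen_commute_of_not_adj hrs hpq ht
    (fun h => htX (h ▸ hp)) (fun h => htX (h ▸ hq)) hpq').symm.eq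

theorem card_filter_adj_le_two [DecidableRel Γ.Adj]
    (hdisj : ∀ C D : Finset (Fin n), Γ.IsNClique 4 C → Γ.IsNClique 4 D → C ≠ D →
      (C ∩ D).card ≤ 2)
    {X : Finset (Fin n)} (hX : Γ.IsNClique 4 X) {t : Fin n} (ht : t ∉ X) :
    (X.filter (Γ.Adj t)).card ≤ 2 := by
  by_contra! h
  obtain ⟨T, hT, hT3⟩ := Finset.exists_subset_card_eq h
  have hTX : T ⊆ X := hT.trans (Finset.filter_subset _ _)
  have hC : Γ.IsNClique 4 (insert t T) :=
    (⟨hX.1.subset (Finset.coe_subset.mpr hTX), hT3⟩ : Γ.IsNClique 3 T).insert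
      fun b hb => (Finset.mem_filter.mp (hT hb)).2
  have hsub : T ⊆ insert t T ∩ X := fun b hb =>
    Finset.mem_inter.mpr ⟨Finset.mem_insert_of_mem hb, hTX hb⟩
  have hle := hdisj _ _ hC hX (fun h => ht (h ▸ Finset.mem_insert_self t T))
  have hge := Finset.card_le_card hsub
  omega

end Lemmas

theorem four_clique_commutator_commute_general {n : ℕ} (Γ : SimpleGraph (Fin n))
    (hdisj : ∀ C D : Finset (Fin n), Γ.IsNClique 4 C → Γ.IsNClique 4 D → C ≠ D →
      (C ∩ D).card ≤ 2)
    (X : Finset (Fin n)) (hX : Γ.IsNClique 4 X)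
    {r s : Fin n} (hrs : r < s) (hout : ¬ (r ∈ X ∧ s ∈ X)) :
    ∀ x ∈ ⁅cliqueSubgroup Γ (X : Set (Fin n)), cliqueSubgroup Γ (X : Set (Fin n))⁆,
      Commute (agen Γ hrs) x := by
  classical
  obtain ⟨t, ht, htX⟩ : ∃ t, (t = r ∨ t = s) ∧ t ∉ X := by
    by_cases hr : r ∈ X
    · exact ⟨s, Or.inr rfl, fun hs => hout ⟨hr, hs⟩⟩
    · exact ⟨r, Or.inl rfl, hr⟩
  obtain ⟨u, v, huv, hu, hv, hnbr⟩ := Finset.exists_lt_cover_filter_of_card_le_two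
    (by simp [hX.card_eq]) (card_filter_adj_le_two hdisj hX htX)
  have hle := cliqueSubgroup_le_cliqueSubgroupErase_sup (Γ := Γ) huv (X : Set (Fin n))
  intro x hx
  have hx' := cliqueSubgroupErase_le_centralizer hrs huv ht htX hnbr
    (commutator_sup_zpowers_le (agen_mem_normalizer_cliqueSubgroupErase huv hu hv)
      (commutator_mono hle hle hx))
  exact (mem_centralizer_singleton_iff.mp hx').symm

/-- Suppose the `4`-cliques of `Γ` are almost disjoint (no two distinct
`4`-cliques share more than two vertices). If `X` is a `4`-clique of `Γ` and `{r,s}` is an edge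
of `Γ` not contained in `X`, then `a_{rs}` commutes with `[P_X, P_X]` in `P_Γ`. -/
theorem four_clique_commutator_commute {n : ℕ} (Γ : SimpleGraph (Fin n))
    (hdisj : ∀ C D : Finset (Fin n), Γ.IsNClique 4 C → Γ.IsNClique 4 D → C ≠ D →
      (C ∩ D).card ≤ 2)
    (X : Finset (Fin n)) (hX : Γ.IsNClique 4 X)
    {r s : Fin n} (hrs : r < s) (ers : Γ.Adj r s) (hout : ¬ (r ∈ X ∧ s ∈ X)) :
    ∀ x ∈ ⁅cliqueSubgroup Γ (X : Set (Fin n)), cliqueSubgroup Γ (X : Set (Fin n))⁆,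
      Commute (agen Γ hrs) x :=
  four_clique_commutator_commute_general Γ hdisj X hX hrs hout

end GraphicBraid
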